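/- arXiv:2409.11044 — 10 statements merged into one kernel-verified Lean document; each statement's English description precedes it below -/
import Mathlib

section
/- Let H = (c_1,…,c_k) be a C(1)-model and φ a preference statement. If φ is strict, then H satisfies φ if and only if some element of Supp^φ appears in H and the earliest element of Supp^φ ∪ Opp^φ appearing in H belongs to Supp^φ. If φ is non-strict, then H satisfies φ if and only if either no element of Opp^φ appears in H, or some element of Supp^φ appears in H before any element of Opp^φ appears. -/
open scoped NNRat

/-- A preference statement `α < β` (strict) or `α ≤ β` (non-strict). -/
structure PrefStmt (A : Type) where
  left : A
  right : A
  strict : Bool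

/-- The negation of a preference statement. -/
def negStmt {A : Type} (φ : PrefStmt A) : PrefStmt A :=
  ⟨φ.right, φ.left, !φ.strict⟩

/-- A `C(1)`-model (a list of evaluations) satisfies `α ≤ β`. -/
def satLe {A : Type} : List (A → ℚ≥0) → A → A → Prop
  | [], _, _ => True
  | c :: H, α, β => c α < c β ∨ (c α = c β ∧ satLe H α β)

/-- A `C(1)`-model (a list of evaluations) satisfies `α < β`. -/
def satLt {A : Type} : List (A → ℚ≥0) → A → A → Prop
  | [], _, _ => False
  | c :: H, α, β => c α < c β ∨ (c α = c β ∧ satLt H α β)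

/-- Satisfaction of a preference statement by a `C(1)`-model. -/
def sat {A : Type} (H : List (A → ℚ≥0)) (φ : PrefStmt A) : Prop :=
  if φ.strict then satLt H φ.left φ.right else satLe H φ.left φ.right
/-- The evaluations in `𝒞` supporting statement `φ`. -/
def SuppSet {A : Type} (𝒞 : Finset (A → ℚ≥0)) (φ : PrefStmt A) : Set (A → ℚ≥0) :=
  {c | c ∈ 𝒞 ∧ c φ.left < c φ.right}

/-- The evaluations in `𝒞` opposing statement `φ`. -/
def OppSet {A : Type} (𝒞 : Finset (A → ℚ≥0)) (φ : PrefStmt A) : Set (A → ℚ≥0) :=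
  {c | c ∈ 𝒞 ∧ c φ.right < c φ.left}

/-- `(Γ', C')` is an inconsistency base for `(Γ, 𝒞)`. -/
def InconsBase {A : Type} (𝒞 : Finset (A → ℚ≥0)) (Γ Γ' : Set (PrefStmt A))
    (C' : Set (A → ℚ≥0)) : Prop :=
  Γ' ⊆ Γ ∧ C' ⊆ (𝒞 : Set (A → ℚ≥0)) ∧
  (∀ φ ∈ Γ', SuppSet 𝒞 φ ∪ OppSet 𝒞 φ ⊆ C') ∧
  (∀ c ∈ C', ∃ φ ∈ Γ', c ∈ OppSet 𝒞 φ)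

/-- First component `Γ^⊥` of the maximal inconsistency base `MIB(Γ, 𝒞)`. -/
def MIBGamma {A : Type} (𝒞 : Finset (A → ℚ≥0)) (Γ : Set (PrefStmt A)) : Set (PrefStmt A) :=
  {φ | ∃ Γ' C', InconsBase 𝒞 Γ Γ' C' ∧ φ ∈ Γ'}

/-- Second component `C^⊥` of the maximal inconsistency base `MIB(Γ, 𝒞)`. -/
def MIBC {A : Type} (𝒞 : Finset (A → ℚ≥0)) (Γ : Set (PrefStmt A)) : Set (A → ℚ≥0) :=
  {c | ∃ Γ' C', InconsBase 𝒞 Γ Γ' C' ∧ c ∈ C'}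

/-! Satisfaction by a `C(1)`-model is lexicographic: unfolding the recursion, `H` satisfies
`α < β` iff the first evaluation of `H` that separates `α` and `β` ranks `β` higher, and `α ≤ β`
iff either that holds or no evaluation of `H` ranks `α` higher. For evaluations in `𝒞`,
`Supp^φ` and `Opp^φ` are exactly the two ways of separating the alternatives of `φ`. -/

theorem List.exists_get_forall_lt_cons_iff {α : Type*} (p q : α → Prop) (c : α) (l : List α) :
    (∃ i : Fin (c :: l).length, p ((c :: l).get i) ∧ ∀ j < i, q ((c :: l).get j)) ↔
      p c ∨ q c ∧ ∃ i : Fin l.length, p (l.get i) ∧ ∀ j < i, q (l.get j) := by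
  simp [Fin.exists_fin_succ, Fin.forall_fin_succ, Fin.succ_pos, and_left_comm (b := q c)]

theorem satLt_iff_exists_get {A : Type} (H : List (A → ℚ≥0)) (α β : A) :
    satLt H α β ↔ ∃ i : Fin H.length, H.get i α < H.get i β ∧
      ∀ j < i, H.get j α = H.get j β := by
  induction H with
  | nil => simp [satLt]
  | cons c H ih =>
    rw [satLt, ih]
    exact (List.exists_get_forall_lt_cons_iff (fun d : A → ℚ≥0 => d α < d β)
      (fun d => d α = d β) c H).symm

theorem satLe_iff_exists_get {A : Type} (H : List (A → ℚ≥0)) (α β : A) :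
    satLe H α β ↔ (∀ c ∈ H, c α ≤ c β) ∨ ∃ i : Fin H.length, H.get i α < H.get i β ∧
      ∀ j < i, H.get j α ≤ H.get j β := by
  induction H with
  | nil => simp [satLe]
  | cons c H ih =>
    simp only [satLe, ih, List.forall_mem_cons,
      List.exists_get_forall_lt_cons_iff (fun d : A → ℚ≥0 => d α < d β) (fun d => d α ≤ d β)]
    rcases lt_trichotomy (c α) (c β) with h | h | h
    · simp [h]
    · simp [h]
    · simp [h.not_ge, h.ne']

section

variable {A : Type} {𝒞 : Finset (A → ℚ≥0)} {φ : PrefStmt A} {c : A → ℚ≥0}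

theorem mem_suppSet_iff (hc : c ∈ 𝒞) : c ∈ SuppSet 𝒞 φ ↔ c φ.left < c φ.right := by
  simp [SuppSet, hc]

theorem notMem_oppSet_iff (hc : c ∈ 𝒞) : c ∉ OppSet 𝒞 φ ↔ c φ.left ≤ c φ.right := by
  simp [OppSet, hc]

theorem notMem_suppSet_and_notMem_oppSet_iff (hc : c ∈ 𝒞) :
    c ∉ SuppSet 𝒞 φ ∧ c ∉ OppSet 𝒞 φ ↔ c φ.left = c φ.right := by
  rw [mem_suppSet_iff hc, notMem_oppSet_iff hc, not_lt, le_antisymm_iff, and_comm]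

end

theorem stmt_2_general {A : Type} (𝒞 : Finset (A → ℚ≥0))
    (H : List (A → ℚ≥0)) (hmem : ∀ c ∈ H, c ∈ 𝒞)
    (φ : PrefStmt A) :
    (φ.strict = true →
      (sat H φ ↔ ∃ i : Fin H.length, H.get i ∈ SuppSet 𝒞 φ ∧
        ∀ j : Fin H.length, j < i → H.get j ∉ SuppSet 𝒞 φ ∧ H.get j ∉ OppSet 𝒞 φ)) ∧
    (φ.strict = false →
      (sat H φ ↔ ((∀ c ∈ H, c ∉ OppSet 𝒞 φ) ∨
        ∃ i : Fin H.length, H.get i ∈ SuppSet 𝒞 φ ∧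
          ∀ j : Fin H.length, j < i → H.get j ∉ OppSet 𝒞 φ))) := by
  have hget (i : Fin H.length) : H.get i ∈ 𝒞 := hmem _ (H.get_mem i)
  refine ⟨fun hs => ?_, fun hs => ?_⟩
  · simp only [sat, hs, if_true, satLt_iff_exists_get]
    -- the conjunction must be rewritten before `mem_suppSet_iff` splits it
    simp only [notMem_suppSet_and_notMem_oppSet_iff, hget]
    simp only [mem_suppSet_iff, hget]
  · simp +contextual only [sat, hs, Bool.false_eq_true, if_false, satLe_iff_exists_get,
      mem_suppSet_iff, notMem_oppSet_iff, hget, hmem]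

/-- Characterization of satisfaction of a preference statement by a `C(1)`-model in terms of
the supporting and opposing evaluations. -/
theorem stmt_2 {A : Type} [Fintype A] (𝒞 : Finset (A → ℚ≥0))
    (H : List (A → ℚ≥0)) (hnd : H.Nodup) (hmem : ∀ c ∈ H, c ∈ 𝒞)
    (φ : PrefStmt A) :
    (φ.strict = true →
      (sat H φ ↔ ∃ i : Fin H.length, H.get i ∈ SuppSet 𝒞 φ ∧
        ∀ j : Fin H.length, j < i → H.get j ∉ SuppSet 𝒞 φ ∧ H.get j ∉ OppSet 𝒞 φ)) ∧
    (φ.strict = false →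
      (sat H φ ↔ ((∀ c ∈ H, c ∉ OppSet 𝒞 φ) ∨
        ∃ i : Fin H.length, H.get i ∈ SuppSet 𝒞 φ ∧
          ∀ j : Fin H.length, j < i → H.get j ∉ OppSet 𝒞 φ))) :=
  stmt_2_general 𝒞 H hmem φ
end

section
/- Let H be a C(1)-model satisfying every statement in Γ, and let (Γ', C') be an inconsistency base for (Γ, C). Then C' ∩ σ(H) = ∅, and for every φ ∈ Γ' we have c(α_φ) = c(β_φ) for every c ∈ σ(H) (so H does not satisfy the strict statement α_φ < β_φ). -/
open scoped NNRat

/- Induct along `H`. A head evaluation `c` lying in `C'` opposes some `ψ ∈ Γ'`, so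
`c :: T` already violates `ψ`. Hence `c ∉ C'`; since `C'` contains every supporter of each
`φ ∈ Γ'`, `c` does not support `φ` either, so `c` must be indifferent on `φ`, and satisfaction
of `φ` passes to the tail `T`. -/

section Satisfaction

variable {A : Type}

lemma sat_cons_iff (c : A → ℚ≥0) (H : List (A → ℚ≥0)) (φ : PrefStmt A) :
    sat (c :: H) φ ↔ c φ.left < c φ.right ∨ (c φ.left = c φ.right ∧ sat H φ) := by
  unfold sat
  cases φ.strict <;> rfl

lemma not_sat_cons_of_lt {c : A → ℚ≥0} {φ : PrefStmt A} (hopp : c φ.right < c φ.left)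
    (H : List (A → ℚ≥0)) : ¬ sat (c :: H) φ := by
  rw [sat_cons_iff]
  rintro (hlt | ⟨heq, -⟩)
  · exact lt_asymm hlt hopp
  · exact hopp.ne' heq

lemma not_satLt_of_forall_eq {H : List (A → ℚ≥0)} {α β : A} (h : ∀ c ∈ H, c α = c β) :
    ¬ satLt H α β := by
  induction H with
  | nil => exact id
  | cons c T ih =>
    rw [List.forall_mem_cons] at h
    rintro (hlt | ⟨-, hT⟩)
    · exact hlt.ne h.1
    · exact ih h.2 hT

end Satisfaction

lemma InconsBase.forall_notMem_and_forall_eq {A : Type} {𝒞 : Finset (A → ℚ≥0)}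
    {Γ Γ' : Set (PrefStmt A)} {C' : Set (A → ℚ≥0)} (hib : InconsBase 𝒞 Γ Γ' C')
    {H : List (A → ℚ≥0)} (hmem : ∀ c ∈ H, c ∈ 𝒞) (hsat : ∀ φ ∈ Γ', sat H φ) :
    (∀ c ∈ H, c ∉ C') ∧ ∀ φ ∈ Γ', ∀ c ∈ H, c φ.left = c φ.right := by
  obtain ⟨-, -, hsupp, hopp⟩ := hib
  induction H with
  | nil => simp
  | cons c T ih =>
    rw [List.forall_mem_cons] at hmem
    have hcC' : c ∉ C' := fun hc => by
      obtain ⟨ψ, hψ, -, hlt⟩ := hopp c hc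
      exact not_sat_cons_of_lt hlt T (hsat ψ hψ)
    have hhead : ∀ φ ∈ Γ', c φ.left = c φ.right ∧ sat T φ := fun φ hφ => by
      have hnot : ¬ c φ.left < c φ.right := fun hlt =>
        hcC' (hsupp φ hφ (Or.inl ⟨hmem.1, hlt⟩))
      exact ((sat_cons_iff c T φ).1 (hsat φ hφ)).resolve_left hnot
    obtain ⟨ihC', iheq⟩ := ih hmem.2 fun φ hφ => (hhead φ hφ).2
    simp only [List.forall_mem_cons]
    exact ⟨⟨hcC', ihC'⟩, fun φ hφ => ⟨(hhead φ hφ).1, iheq φ hφ⟩⟩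

theorem stmt_3_general {A : Type} (𝒞 : Finset (A → ℚ≥0))
    (Γ Γ' : Set (PrefStmt A)) (C' : Set (A → ℚ≥0))
    (H : List (A → ℚ≥0)) (hmem : ∀ c ∈ H, c ∈ 𝒞)
    (hsat : ∀ φ ∈ Γ, sat H φ)
    (hib : InconsBase 𝒞 Γ Γ' C') :
    (∀ c ∈ H, c ∉ C') ∧
    ∀ φ ∈ Γ', (∀ c ∈ H, c φ.left = c φ.right) ∧ ¬ satLt H φ.left φ.right := by
  obtain ⟨hnotC', heq⟩ :=
    hib.forall_notMem_and_forall_eq hmem fun φ hφ => hsat φ (hib.1 hφ)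
  exact ⟨hnotC', fun φ hφ => ⟨heq φ hφ, not_satLt_of_forall_eq (heq φ hφ)⟩⟩

/-- If `H` is a `C(1)`-model of `Γ` and `(Γ', C')` is an inconsistency base for `(Γ, 𝒞)`,
then `C' ∩ σ(H) = ∅`, and every `φ ∈ Γ'` is indifferent on all of `σ(H)`,
so `H` does not satisfy the strict statement `α_φ < β_φ`. -/
theorem stmt_3 {A : Type} [Fintype A] (𝒞 : Finset (A → ℚ≥0))
    (Γ Γ' : Set (PrefStmt A)) (C' : Set (A → ℚ≥0))
    (H : List (A → ℚ≥0)) (hnd : H.Nodup) (hmem : ∀ c ∈ H, c ∈ 𝒞)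
    (hsat : ∀ φ ∈ Γ, sat H φ)
    (hib : InconsBase 𝒞 Γ Γ' C') :
    (∀ c ∈ H, c ∉ C') ∧
    ∀ φ ∈ Γ', (∀ c ∈ H, c φ.left = c φ.right) ∧ ¬ satLt H φ.left φ.right :=
  stmt_3_general 𝒞 Γ Γ' C' H hmem hsat hib
end

section
/- Let H = (c_1,…,c_k) be any output of the greedy algorithm on (Γ, C). Then H satisfies every statement in Γ^(≤), the set of non-strict versions α_φ ≤ β_φ of the statements φ ∈ Γ; moreover H satisfies (strictly) every statement in Supp(H). -/
open scoped NNRat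

/-- `Opp(c)`: the statements of `Γ` opposed by evaluation `c`. -/
def OppG {A : Type} (Γ : Set (PrefStmt A)) (c : A → ℚ≥0) : Set (PrefStmt A) :=
  {φ | φ ∈ Γ ∧ c φ.right < c φ.left}

/-- `Supp(c₁,…,c_m)`: the statements of `Γ` supported by some evaluation of the list `L`. -/
def SuppL {A : Type} (Γ : Set (PrefStmt A)) (L : List (A → ℚ≥0)) : Set (PrefStmt A) :=
  {φ | φ ∈ Γ ∧ ∃ c ∈ L, c φ.left < c φ.right}

/-- `H` is a possible output of the greedy algorithm on `(Γ, 𝒞)`. -/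
def GreedyOutput {A : Type} (𝒞 : Finset (A → ℚ≥0)) (Γ : Set (PrefStmt A))
    (H : List (A → ℚ≥0)) : Prop :=
  H.Nodup ∧ (∀ c ∈ H, c ∈ 𝒞) ∧
  (∀ i : Fin H.length, OppG Γ (H.get i) ⊆ SuppL Γ (H.take i.1)) ∧
  (∀ c ∈ 𝒞, c ∉ H → ¬ (OppG Γ c ⊆ SuppL Γ H))

/-! The first evaluation of `H` that separates `α_φ` from `β_φ` cannot oppose `φ ∈ Γ`: the greedy
condition would put a supporting evaluation before it, and that one separates the two alternatives
earlier. So the first separating evaluation supports `φ`, which is exactly lexicographic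
satisfaction, and such an evaluation exists whenever some evaluation of `H` supports `φ`. -/

theorem satLe_and_satLt_of_supported_before_opposed {A : Type} {α β : A} :
    ∀ {H : List (A → ℚ≥0)},
      (∀ i : Fin H.length, H.get i β < H.get i α → ∃ c ∈ H.take i, c α < c β) →
      satLe H α β ∧ ((∃ c ∈ H, c α < c β) → satLt H α β)
  | [], _ => ⟨trivial, fun ⟨_, hc, _⟩ => absurd hc List.not_mem_nil⟩
  | c :: T, h => by
    have hc : c α ≤ c β := not_lt.mp fun hopp => by simpa using h ⟨0, by simp⟩ hopp
    rcases hc.lt_or_eq with hlt | heq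
    · exact ⟨Or.inl hlt, fun _ => Or.inl hlt⟩
    have hT : ∀ i : Fin T.length, T.get i β < T.get i α → ∃ d ∈ T.take i, d α < d β := by
      intro i hopp
      obtain ⟨d, hd, hdlt⟩ := h i.succ (by simpa using hopp)
      rcases List.mem_cons.mp (by simpa using hd) with rfl | hd
      · exact absurd heq hdlt.ne
      · exact ⟨d, hd, hdlt⟩
    obtain ⟨hle, hlt⟩ := satLe_and_satLt_of_supported_before_opposed hT
    refine ⟨Or.inr ⟨heq, hle⟩, fun ⟨d, hd, hdlt⟩ => Or.inr ⟨heq, hlt ⟨d, ?_, hdlt⟩⟩⟩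
    rcases List.mem_cons.mp hd with rfl | hd
    · exact absurd heq hdlt.ne
    · exact hd

theorem GreedyOutput.supported_before_opposed {A : Type} {𝒞 : Finset (A → ℚ≥0)}
    {Γ : Set (PrefStmt A)} {H : List (A → ℚ≥0)} (hgo : GreedyOutput 𝒞 Γ H) {φ : PrefStmt A}
    (hφ : φ ∈ Γ) (i : Fin H.length) (hopp : H.get i φ.right < H.get i φ.left) :
    ∃ c ∈ H.take i, c φ.left < c φ.right :=
  (hgo.2.2.1 i ⟨hφ, hopp⟩).2

theorem stmt_7_general {A : Type} (𝒞 : Finset (A → ℚ≥0)) (Γ : Set (PrefStmt A))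
    (H : List (A → ℚ≥0)) (hgo : GreedyOutput 𝒞 Γ H) :
    (∀ φ ∈ Γ, satLe H φ.left φ.right) ∧
    (∀ φ ∈ SuppL Γ H, satLt H φ.left φ.right) := by
  have key (φ : PrefStmt A) (hφ : φ ∈ Γ) :=
    satLe_and_satLt_of_supported_before_opposed (hgo.supported_before_opposed hφ)
  exact ⟨fun φ hφ => (key φ hφ).1, fun φ ⟨hφ, hsupp⟩ => (key φ hφ).2 hsupp⟩

/-- Any output `H` of the greedy algorithm satisfies `Γ^(≤)` (the non-strict versions of all
statements of `Γ`), and strictly satisfies every statement in `Supp(H)`. -/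
theorem stmt_7 {A : Type} [Fintype A] (𝒞 : Finset (A → ℚ≥0)) (Γ : Set (PrefStmt A))
    (H : List (A → ℚ≥0)) (hgo : GreedyOutput 𝒞 Γ H) :
    (∀ φ ∈ Γ, satLe H φ.left φ.right) ∧
    (∀ φ ∈ SuppL Γ H, satLt H φ.left φ.right) :=
  stmt_7_general 𝒞 Γ H hgo
end

section
/- Let H be any output of the greedy algorithm on (Γ, C), and write MIB(Γ, C) = (Γ^⊥, C^⊥). Then C^⊥ = C − σ(H) and Γ^⊥ = Γ − Supp(H). -/
/-!
Every evaluation of `H` is accepted only after every statement it opposes is already supported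
by an earlier one, so by induction along `H` no evaluation of `H` can lie in an inconsistency
base: its opposed statement would drag an earlier evaluation of `H` into the base. Conversely,
maximality of the greedy output says that each evaluation outside `H` opposes a statement not
supported by `H`, which makes `(Γ − Supp(H), 𝒞 − σ(H))` itself an inconsistency base. Being one
that contains all others, it is the maximal inconsistency base.
-/

open scoped NNRat

namespace InconsBase

variable {A : Type} {𝒞 : Finset (A → ℚ≥0)} {Γ Γ₀ : Set (PrefStmt A)} {C₀ : Set (A → ℚ≥0)}

theorem mem_of_supports (hb : InconsBase 𝒞 Γ Γ₀ C₀) {φ : PrefStmt A} (hφ : φ ∈ Γ₀)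
    {c : A → ℚ≥0} (hc : c ∈ 𝒞) (hlt : c φ.left < c φ.right) : c ∈ C₀ :=
  hb.2.2.1 φ hφ (Or.inl ⟨hc, hlt⟩)

theorem mib_eq_of_forall_le (hb : InconsBase 𝒞 Γ Γ₀ C₀)
    (hle : ∀ Γ' C', InconsBase 𝒞 Γ Γ' C' → Γ' ⊆ Γ₀ ∧ C' ⊆ C₀) :
    MIBC 𝒞 Γ = C₀ ∧ MIBGamma 𝒞 Γ = Γ₀ := by
  constructor
  · ext c
    exact ⟨fun ⟨Γ', C', hb', hc⟩ => (hle Γ' C' hb').2 hc, fun hc => ⟨Γ₀, C₀, hb, hc⟩⟩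
  · ext φ
    exact ⟨fun ⟨Γ', C', hb', hφ⟩ => (hle Γ' C' hb').1 hφ, fun hφ => ⟨Γ₀, C₀, hb, hφ⟩⟩

end InconsBase

section Greedy

variable {A : Type} {𝒞 : Finset (A → ℚ≥0)} {Γ : Set (PrefStmt A)} {H : List (A → ℚ≥0)}

theorem oppG_subset_suppL_of_mem
    (hord : ∀ i : Fin H.length, OppG Γ (H.get i) ⊆ SuppL Γ (H.take i.1))
    {c : A → ℚ≥0} (hc : c ∈ H) : OppG Γ c ⊆ SuppL Γ H := by
  obtain ⟨i, rfl⟩ := List.mem_iff_get.mp hc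
  rintro φ hφ
  obtain ⟨hφΓ, c', hc', hlt⟩ := hord i hφ
  exact ⟨hφΓ, c', List.mem_of_mem_take hc', hlt⟩

theorem notMem_of_inconsBase (hmem : ∀ c ∈ H, c ∈ 𝒞)
    (hord : ∀ i : Fin H.length, OppG Γ (H.get i) ⊆ SuppL Γ (H.take i.1))
    {Γ₀ : Set (PrefStmt A)} {C₀ : Set (A → ℚ≥0)} (hb : InconsBase 𝒞 Γ Γ₀ C₀)
    {c : A → ℚ≥0} (hc : c ∈ H) : c ∉ C₀ := by
  obtain ⟨i, rfl⟩ := List.mem_iff_get.mp hc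
  induction i using WellFoundedLT.induction with
  | ind i ih =>
    intro hi
    obtain ⟨φ, hφ, -, hopp⟩ := hb.2.2.2 _ hi
    obtain ⟨-, c', hc', hlt⟩ := hord i ⟨hb.1 hφ, hopp⟩
    obtain ⟨j, hj, rfl⟩ := List.mem_take_iff_getElem.mp hc'
    have hji : j < i.1 := lt_of_lt_of_le hj (min_le_left _ _)
    exact ih ⟨j, hji.trans i.2⟩ hji (List.getElem_mem _)
      (hb.mem_of_supports hφ (hmem _ (List.getElem_mem _)) hlt)

namespace GreedyOutput

theorem inconsBase_compl (hgo : GreedyOutput 𝒞 Γ H) :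
    InconsBase 𝒞 Γ (Γ \ SuppL Γ H) ((𝒞 : Set (A → ℚ≥0)) \ {c | c ∈ H}) := by
  obtain ⟨-, -, hord, hmax⟩ := hgo
  refine ⟨Set.sdiff_subset, Set.sdiff_subset, ?_, ?_⟩
  · rintro φ ⟨hφΓ, hφH⟩ c (⟨hc, hlt⟩ | ⟨hc, hlt⟩)
    · exact ⟨hc, fun hcH => hφH ⟨hφΓ, c, hcH, hlt⟩⟩
    · exact ⟨hc, fun hcH => hφH (oppG_subset_suppL_of_mem hord hcH ⟨hφΓ, hlt⟩)⟩
  · rintro c ⟨hc, hcH⟩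
    obtain ⟨φ, ⟨hφΓ, hlt⟩, hφH⟩ := Set.not_subset.mp (hmax c hc hcH)
    exact ⟨φ, ⟨hφΓ, hφH⟩, hc, hlt⟩

theorem le_compl (hgo : GreedyOutput 𝒞 Γ H) {Γ₀ : Set (PrefStmt A)} {C₀ : Set (A → ℚ≥0)}
    (hb : InconsBase 𝒞 Γ Γ₀ C₀) :
    Γ₀ ⊆ Γ \ SuppL Γ H ∧ C₀ ⊆ (𝒞 : Set (A → ℚ≥0)) \ {c | c ∈ H} := by
  obtain ⟨-, hmem, hord, -⟩ := hgo
  constructor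
  · rintro φ hφ
    refine ⟨hb.1 hφ, ?_⟩
    rintro ⟨-, c, hcH, hlt⟩
    exact notMem_of_inconsBase hmem hord hb hcH (hb.mem_of_supports hφ (hmem c hcH) hlt)
  · exact fun c hc => ⟨hb.2.1 hc, fun hcH => notMem_of_inconsBase hmem hord hb hcH hc⟩

end GreedyOutput

end Greedy

theorem stmt_8_general {A : Type} (𝒞 : Finset (A → ℚ≥0)) (Γ : Set (PrefStmt A))
    (H : List (A → ℚ≥0)) (hgo : GreedyOutput 𝒞 Γ H) :
    MIBC 𝒞 Γ = (𝒞 : Set (A → ℚ≥0)) \ {c | c ∈ H} ∧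
    MIBGamma 𝒞 Γ = Γ \ SuppL Γ H :=
  hgo.inconsBase_compl.mib_eq_of_forall_le fun _ _ hb => hgo.le_compl hb

/-- For any output `H` of the greedy algorithm, `C^⊥ = 𝒞 − σ(H)` and `Γ^⊥ = Γ − Supp(H)`. -/
theorem stmt_8 {A : Type} [Fintype A] (𝒞 : Finset (A → ℚ≥0)) (Γ : Set (PrefStmt A))
    (H : List (A → ℚ≥0)) (hgo : GreedyOutput 𝒞 Γ H) :
    MIBC 𝒞 Γ = (𝒞 : Set (A → ℚ≥0)) \ {c | c ∈ H} ∧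
    MIBGamma 𝒞 Γ = Γ \ SuppL Γ H :=
  stmt_8_general 𝒞 Γ H hgo
end

section
/- Let H be any output of the greedy algorithm on (Γ, C), and write MIB(Γ, C) = (Γ^⊥, C^⊥). Then Γ is C(1)-consistent if and only if Supp(H) contains all the strict elements of Γ, which holds if and only if Γ^⊥ contains no strict statements. Moreover, if Γ is C(1)-consistent then H satisfies every statement in Γ. -/
open scoped NNRat

/-- `H` is a `D(1)`-model: a duplicate-free list of evaluations from `D`. -/
def IsModel {A : Type} (D : Set (A → ℚ≥0)) (H : List (A → ℚ≥0)) : Prop :=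
  H.Nodup ∧ ∀ c ∈ H, c ∈ D

/-- `H` is a `D(1*)`-model: a duplicate-free list whose entries are exactly `D`. -/
def IsFullModel {A : Type} (D : Set (A → ℚ≥0)) (H : List (A → ℚ≥0)) : Prop :=
  H.Nodup ∧ ∀ c, c ∈ H ↔ c ∈ D

/-- `H` satisfies every statement in `Γ`. -/
def SatAll {A : Type} (H : List (A → ℚ≥0)) (Γ : Set (PrefStmt A)) : Prop :=
  ∀ φ ∈ Γ, sat H φ

/-- `Γ ⊨_{D(1)} φ`. -/
def Entails {A : Type} (D : Set (A → ℚ≥0)) (Γ : Set (PrefStmt A)) (φ : PrefStmt A) : Prop :=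
  ∀ H, IsModel D H → SatAll H Γ → sat H φ

/-- `Γ ⊨_{D(1*)} φ`. -/
def EntailsStar {A : Type} (D : Set (A → ℚ≥0)) (Γ : Set (PrefStmt A)) (φ : PrefStmt A) : Prop :=
  ∀ H, IsFullModel D H → SatAll H Γ → sat H φ

/-- `Γ` is strongly `D(1)`-consistent. -/
def StrongCons {A : Type} (D : Set (A → ℚ≥0)) (Γ : Set (PrefStmt A)) : Prop :=
  ∃ H, IsFullModel D H ∧ SatAll H Γ

/-!
Lexicographically, a list satisfies `α ≤ β` iff every entry opposing it is preceded by an entry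
supporting it, and `α < β` iff moreover some entry supports it. The greedy condition says exactly
this about `H` for every statement of `Γ`, so `H` satisfies all non-strict statements and a strict
one iff it lies in `Supp(H)`.

If `H'` is any model of `Γ`, induction along `H'` shows each of its entries is picked by the
greedy algorithm: whatever `H'[i]` opposes is supported by an earlier entry of `H'`, hence by `H`,
and maximality of `H` applies. So `Supp(H') ⊆ Supp(H)`, and consistency puts every strict
statement into `Supp(H)`. Similarly, induction along `H` shows no entry of `H` lies in an
inconsistency base; conversely, the statements unsupported by `H` together with the evaluations
opposing them form an inconsistency base, by maximality of `H`.
-/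

section

variable {A : Type}

theorem List.forall_mem_of_forall_take_imp {α : Type*} {L : List α} {p : α → Prop}
    (h : ∀ (i : ℕ) (hi : i < L.length), (∀ e ∈ L.take i, p e) → p L[i]) : ∀ e ∈ L, p e := by
  induction L with
  | nil => simp
  | cons c L ih =>
    have hc : p c := h 0 (by simp) (by simp)
    refine List.forall_mem_cons.2 ⟨hc, ih fun i hi hpre => h (i + 1) (by simpa) ?_⟩
    simpa [hc] using hpre

theorem satLe_iff_forall_opp {L : List (A → ℚ≥0)} {α β : A} :
    satLe L α β ↔
      ∀ (i : ℕ) (hi : i < L.length), L[i] β < L[i] α → ∃ e ∈ L.take i, e α < e β := by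
  induction L with
  | nil => simp [satLe]
  | cons c L ih =>
    rw [satLe, ih]
    constructor
    · rintro (hc | ⟨hc, hL⟩) (_ | i) hi hopp
      · exact absurd hc (not_lt.2 hopp.le)
      · exact ⟨c, by simp, hc⟩
      · simp [hc] at hopp
      · obtain ⟨e, he, hlt⟩ := hL i (by simpa using hi) hopp
        exact ⟨e, by simp [he], hlt⟩
    · intro h
      rcases lt_trichotomy (c α) (c β) with hc | hc | hc
      · exact Or.inl hc
      · refine Or.inr ⟨hc, fun i hi hopp => ?_⟩
        obtain ⟨e, he, hlt⟩ := h (i + 1) (by simpa) hopp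
        rcases List.mem_cons.1 (by simpa using he) with rfl | he
        · exact absurd hlt (by simp [hc])
        · exact ⟨e, he, hlt⟩
      · obtain ⟨e, he, _⟩ := h 0 (by simp) hc
        simp at he

theorem satLt_iff_satLe_and_exists {L : List (A → ℚ≥0)} {α β : A} :
    satLt L α β ↔ satLe L α β ∧ ∃ c ∈ L, c α < c β := by
  induction L with
  | nil => simp [satLt]
  | cons c L ih =>
    rw [satLt, satLe, ih]
    rcases lt_trichotomy (c α) (c β) with hc | hc | hc
    · simp [hc]
    · simp [hc]
    · simp [hc.ne', not_lt.2 hc.le]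

theorem satLe_of_sat {L : List (A → ℚ≥0)} {φ : PrefStmt A} (h : sat L φ) :
    satLe L φ.left φ.right := by
  unfold sat at h
  split at h
  · exact (satLt_iff_satLe_and_exists.1 h).1
  · exact h

namespace GreedyOutput

variable {𝒞 : Finset (A → ℚ≥0)} {Γ : Set (PrefStmt A)} {H : List (A → ℚ≥0)}

theorem exists_supp_of_opp (hgo : GreedyOutput 𝒞 Γ H) {φ : PrefStmt A} (hφ : φ ∈ Γ)
    {i : ℕ} (hi : i < H.length) (hopp : H[i] φ.right < H[i] φ.left) :
    ∃ e ∈ H.take i, e φ.left < e φ.right :=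
  (hgo.2.2.1 ⟨i, hi⟩ ⟨hφ, hopp⟩).2

theorem satLe (hgo : GreedyOutput 𝒞 Γ H) {φ : PrefStmt A} (hφ : φ ∈ Γ) :
    satLe H φ.left φ.right :=
  satLe_iff_forall_opp.2 fun _ hi hopp => hgo.exists_supp_of_opp hφ hi hopp

theorem satLt_iff (hgo : GreedyOutput 𝒞 Γ H) {φ : PrefStmt A} (hφ : φ ∈ Γ) :
    satLt H φ.left φ.right ↔ φ ∈ SuppL Γ H := by
  rw [satLt_iff_satLe_and_exists]
  exact ⟨fun h => ⟨hφ, h.2⟩, fun h => ⟨hgo.satLe hφ, h.2⟩⟩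

theorem satAll (hgo : GreedyOutput 𝒞 Γ H)
    (hstrict : ∀ φ ∈ Γ, φ.strict = true → φ ∈ SuppL Γ H) : SatAll H Γ := by
  intro φ hφ
  unfold sat
  split
  · exact (hgo.satLt_iff hφ).2 (hstrict φ hφ ‹_›)
  · exact hgo.satLe hφ

theorem isModel (hgo : GreedyOutput 𝒞 Γ H) : IsModel (𝒞 : Set (A → ℚ≥0)) H :=
  ⟨hgo.1, hgo.2.1⟩

theorem mem_of_mem_model (hgo : GreedyOutput 𝒞 Γ H) {H' : List (A → ℚ≥0)}
    (hmodel : IsModel (𝒞 : Set (A → ℚ≥0)) H') (hsat : SatAll H' Γ) : ∀ c ∈ H', c ∈ H := by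
  refine List.forall_mem_of_forall_take_imp fun i hi hpre => ?_
  by_contra hnot
  refine hgo.2.2.2 _ (hmodel.2 _ (List.getElem_mem hi)) hnot fun χ ⟨hχ, hopp⟩ => ?_
  obtain ⟨e, he, hlt⟩ := satLe_iff_forall_opp.1 (satLe_of_sat (hsat χ hχ)) i hi hopp
  exact ⟨hχ, e, hpre e he, hlt⟩

theorem mem_suppL_of_model (hgo : GreedyOutput 𝒞 Γ H) {H' : List (A → ℚ≥0)}
    (hmodel : IsModel (𝒞 : Set (A → ℚ≥0)) H') (hsat : SatAll H' Γ) {φ : PrefStmt A}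
    (hφ : φ ∈ Γ) (hstrict : φ.strict = true) : φ ∈ SuppL Γ H := by
  have hlt := hsat φ hφ
  simp only [sat, hstrict, if_true] at hlt
  obtain ⟨c, hc, hsupp⟩ := (satLt_iff_satLe_and_exists.1 hlt).2
  exact ⟨hφ, c, hgo.mem_of_mem_model hmodel hsat c hc, hsupp⟩

theorem not_mem_inconsBase (hgo : GreedyOutput 𝒞 Γ H) {Γ' : Set (PrefStmt A)}
    {C' : Set (A → ℚ≥0)} (hbase : InconsBase 𝒞 Γ Γ' C') : ∀ c ∈ H, c ∉ C' := by
  refine List.forall_mem_of_forall_take_imp fun i hi hpre hmem => ?_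
  obtain ⟨φ, hφ, -, hopp⟩ := hbase.2.2.2 _ hmem
  obtain ⟨e, he, hlt⟩ := hgo.exists_supp_of_opp (hbase.1 hφ) hi hopp
  exact hpre e he (hbase.2.2.1 φ hφ (Or.inl ⟨hgo.2.1 e (List.mem_of_mem_take he), hlt⟩))

theorem inconsBase_unsupported (hgo : GreedyOutput 𝒞 Γ H) :
    InconsBase 𝒞 Γ {ψ | ψ ∈ Γ ∧ ψ ∉ SuppL Γ H}
      {c | ∃ ψ, (ψ ∈ Γ ∧ ψ ∉ SuppL Γ H) ∧ c ∈ OppSet 𝒞 ψ} := by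
  refine ⟨fun ψ hψ => hψ.1, fun c ⟨_, _, hc, _⟩ => hc, ?_, fun c hc => hc⟩
  rintro ψ ⟨hψ, hunsupp⟩ c (⟨hc, hsupp⟩ | hopp)
  · have hcH : c ∉ H := fun hcH => hunsupp ⟨hψ, c, hcH, hsupp⟩
    obtain ⟨χ, ⟨hχ, hχopp⟩, hχunsupp⟩ := Set.not_subset.1 (hgo.2.2.2 c hc hcH)
    exact ⟨χ, ⟨hχ, hχunsupp⟩, hc, hχopp⟩
  · exact ⟨ψ, ⟨hψ, hunsupp⟩, hopp⟩

end GreedyOutput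

end

theorem stmt_9_general {A : Type} (𝒞 : Finset (A → ℚ≥0)) (Γ : Set (PrefStmt A))
    (H : List (A → ℚ≥0)) (hgo : GreedyOutput 𝒞 Γ H) :
    ((∃ H' : List (A → ℚ≥0), IsModel (𝒞 : Set (A → ℚ≥0)) H' ∧ SatAll H' Γ) ↔
      (∀ φ ∈ Γ, φ.strict = true → φ ∈ SuppL Γ H)) ∧
    ((∀ φ ∈ Γ, φ.strict = true → φ ∈ SuppL Γ H) ↔
      (∀ φ ∈ MIBGamma 𝒞 Γ, φ.strict = false)) ∧
    ((∃ H' : List (A → ℚ≥0), IsModel (𝒞 : Set (A → ℚ≥0)) H' ∧ SatAll H' Γ) → SatAll H Γ) := by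
  have hcons : (∃ H' : List (A → ℚ≥0), IsModel (𝒞 : Set (A → ℚ≥0)) H' ∧ SatAll H' Γ) →
      ∀ φ ∈ Γ, φ.strict = true → φ ∈ SuppL Γ H :=
    fun ⟨_, hmodel, hsat⟩ _ => hgo.mem_suppL_of_model hmodel hsat
  refine ⟨⟨hcons, fun hstrict => ⟨H, hgo.isModel, hgo.satAll hstrict⟩⟩, ⟨?_, ?_⟩,
    fun h => hgo.satAll (hcons h)⟩
  · rintro hstrict φ ⟨Γ', C', hbase, hφ⟩
    by_contra hφstrict
    obtain ⟨-, c, hcH, hsupp⟩ := hstrict φ (hbase.1 hφ) (by simpa using hφstrict)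
    exact hgo.not_mem_inconsBase hbase c hcH
      (hbase.2.2.1 φ hφ (Or.inl ⟨hgo.2.1 c hcH, hsupp⟩))
  · intro hmib φ hφ hφstrict
    by_contra hunsupp
    have := hmib φ ⟨_, _, hgo.inconsBase_unsupported, hφ, hunsupp⟩
    simp [hφstrict] at this

/-- For any output `H` of the greedy algorithm: `Γ` is `C(1)`-consistent iff `Supp(H)` contains
all the strict elements of `Γ`, which holds iff `Γ^⊥` contains no strict statements; moreover,
if `Γ` is `C(1)`-consistent then `H` satisfies `Γ`. -/
theorem stmt_9 {A : Type} [Fintype A] (𝒞 : Finset (A → ℚ≥0)) (Γ : Set (PrefStmt A))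
    (H : List (A → ℚ≥0)) (hgo : GreedyOutput 𝒞 Γ H) :
    ((∃ H' : List (A → ℚ≥0), IsModel (𝒞 : Set (A → ℚ≥0)) H' ∧ SatAll H' Γ) ↔
      (∀ φ ∈ Γ, φ.strict = true → φ ∈ SuppL Γ H)) ∧
    ((∀ φ ∈ Γ, φ.strict = true → φ ∈ SuppL Γ H) ↔
      (∀ φ ∈ MIBGamma 𝒞 Γ, φ.strict = false)) ∧
    ((∃ H' : List (A → ℚ≥0), IsModel (𝒞 : Set (A → ℚ≥0)) H' ∧ SatAll H' Γ) → SatAll H Γ) :=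
  stmt_9_general 𝒞 Γ H hgo
end

section
/- Suppose Γ is strongly C(1)-consistent. Then for all alternatives α, β: Γ ⊨_{C(1)} α ≤ β if and only if Γ ⊨_{C(1*)} α ≤ β. -/
open scoped NNRat

/-!
Every `C(1)`-model `H` of `Γ` extends to a `C(1*)`-model `H ++ T` of `Γ`, where `T` lists the
evaluations of a fixed `C(1*)`-model `G` of `Γ` that are missing from `H`, in the order of `G`.
A statement of `Γ` that `H` decides strictly stays decided by the prefix `H`; one on which `H` is
indifferent is decided by `T`, which satisfies it because `G` does and the entries dropped from
`G` all lie in `H`, hence are indifferent too. Conversely, `α ≤ β` in `H ++ T` forces `α ≤ β` in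
the prefix `H`, so `⊨_{C(1*)}` already gives `⊨_{C(1)}` for non-strict statements.
-/

section Lexicographic

variable {A : Type}

def Ties (H : List (A → ℚ≥0)) (α β : A) : Prop := ∀ c ∈ H, c α = c β

theorem satLe_iff_satLt_or_ties (H : List (A → ℚ≥0)) (α β : A) :
    satLe H α β ↔ satLt H α β ∨ Ties H α β := by
  induction H with
  | nil => simp [satLe, satLt, Ties]
  | cons c H ih =>
    simp only [satLe, satLt, Ties, List.forall_mem_cons, ih]
    constructor
    · rintro (hlt | ⟨heq, hlt | hties⟩)
      exacts [Or.inl (Or.inl hlt), Or.inl (Or.inr ⟨heq, hlt⟩), Or.inr ⟨heq, hties⟩]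
    · rintro ((hlt | ⟨heq, hlt⟩) | ⟨heq, hties⟩)
      exacts [Or.inl hlt, Or.inr ⟨heq, Or.inl hlt⟩, Or.inr ⟨heq, Or.inr hties⟩]

theorem satLt_append (H T : List (A → ℚ≥0)) (α β : A) :
    satLt (H ++ T) α β ↔ satLt H α β ∨ (Ties H α β ∧ satLt T α β) := by
  induction H with
  | nil => simp [satLt, Ties]
  | cons c H ih =>
    simp only [List.cons_append, satLt, Ties, List.forall_mem_cons, ih]
    constructor
    · rintro (hlt | ⟨heq, hlt | ⟨hties, hT⟩⟩)
      exacts [Or.inl (Or.inl hlt), Or.inl (Or.inr ⟨heq, hlt⟩),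
        Or.inr ⟨⟨heq, hties⟩, hT⟩]
    · rintro ((hlt | ⟨heq, hlt⟩) | ⟨⟨heq, hties⟩, hT⟩)
      exacts [Or.inl hlt, Or.inr ⟨heq, Or.inl hlt⟩, Or.inr ⟨heq, Or.inr ⟨hties, hT⟩⟩]

theorem satLe_append (H T : List (A → ℚ≥0)) (α β : A) :
    satLe (H ++ T) α β ↔ satLt H α β ∨ (Ties H α β ∧ satLe T α β) := by
  simp only [satLe_iff_satLt_or_ties, satLt_append, Ties, List.forall_mem_append]
  tauto

theorem satLe_of_satLe_append {H T : List (A → ℚ≥0)} {α β : A} (h : satLe (H ++ T) α β) :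
    satLe H α β := by
  rw [satLe_iff_satLt_or_ties]
  rcases (satLe_append H T α β).1 h with hlt | ⟨hties, -⟩
  exacts [Or.inl hlt, Or.inr hties]

theorem satLt_filter (p : (A → ℚ≥0) → Bool) {T : List (A → ℚ≥0)} {α β : A}
    (hdrop : ∀ c ∈ T, p c = false → c α = c β) (h : satLt T α β) :
    satLt (T.filter p) α β := by
  induction T with
  | nil => exact h
  | cons c T ih =>
    have hdrop' : ∀ d ∈ T, p d = false → d α = d β := fun d hd => hdrop d (.tail c hd)
    cases hp : p c
    · rw [List.filter_cons_of_neg (by simp [hp])]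
      rcases h with hlt | ⟨-, hT⟩
      exacts [absurd (hdrop c List.mem_cons_self hp) hlt.ne, ih hdrop' hT]
    · rw [List.filter_cons_of_pos hp]
      rcases h with hlt | ⟨heq, hT⟩
      exacts [Or.inl hlt, Or.inr ⟨heq, ih hdrop' hT⟩]

theorem satLe_filter (p : (A → ℚ≥0) → Bool) {T : List (A → ℚ≥0)} {α β : A}
    (hdrop : ∀ c ∈ T, p c = false → c α = c β) (h : satLe T α β) :
    satLe (T.filter p) α β := by
  rw [satLe_iff_satLt_or_ties] at h ⊢
  rcases h with hlt | hties
  · exact Or.inl (satLt_filter p hdrop hlt)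
  · exact Or.inr fun c hc => hties c (List.mem_of_mem_filter hc)

theorem sat_append {H T : List (A → ℚ≥0)} {φ : PrefStmt A} (hH : sat H φ)
    (hT : Ties H φ.left φ.right → sat T φ) : sat (H ++ T) φ := by
  unfold sat at *
  split_ifs at hH hT ⊢
  · exact (satLt_append H T _ _).2 (Or.inl hH)
  · rcases (satLe_iff_satLt_or_ties H _ _).1 hH with hlt | hties
    · exact (satLe_append H T _ _).2 (Or.inl hlt)
    · exact (satLe_append H T _ _).2 (Or.inr ⟨hties, hT hties⟩)

theorem sat_filter (p : (A → ℚ≥0) → Bool) {T : List (A → ℚ≥0)} {φ : PrefStmt A}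
    (hdrop : ∀ c ∈ T, p c = false → c φ.left = c φ.right) (h : sat T φ) :
    sat (T.filter p) φ := by
  unfold sat at *
  split_ifs at h ⊢
  exacts [satLt_filter p hdrop h, satLe_filter p hdrop h]

end Lexicographic

section Models

variable {A : Type} {D : Set (A → ℚ≥0)}

theorem IsFullModel.isModel {H : List (A → ℚ≥0)} (hH : IsFullModel D H) : IsModel D H :=
  ⟨hH.1, fun c hc => (hH.2 c).1 hc⟩

theorem IsModel.isFullModel_append_filter [DecidableEq (A → ℚ≥0)] {H G : List (A → ℚ≥0)}
    (hH : IsModel D H) (hG : IsFullModel D G) :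
    IsFullModel D (H ++ G.filter fun c => c ∉ H) := by
  refine ⟨List.nodup_append.2 ⟨hH.1, hG.1.filter _, ?_⟩, fun c => ?_⟩
  · rintro c hc d hd rfl
    simp [hc] at hd
  · by_cases hc : c ∈ H
    · simp [hc, hH.2 c hc]
    · simp [hc, hG.2 c]

end Models

theorem stmt_13_general {A : Type} (𝒞 : Finset (A → ℚ≥0)) (Γ : Set (PrefStmt A))
    (h : StrongCons (𝒞 : Set (A → ℚ≥0)) Γ) (α β : A) :
    Entails (𝒞 : Set (A → ℚ≥0)) Γ ⟨α, β, false⟩ ↔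
      EntailsStar (𝒞 : Set (A → ℚ≥0)) Γ ⟨α, β, false⟩ := by
  classical
  refine ⟨fun hent H hH hΓ => hent H hH.isModel hΓ, fun hent H hH hΓ => ?_⟩
  obtain ⟨G, hG, hGΓ⟩ := h
  have hext : SatAll (H ++ G.filter fun c => c ∉ H) Γ := fun φ hφ =>
    sat_append (hΓ φ hφ) fun hties =>
      sat_filter _ (fun c _ hc => hties c (by simpa using hc)) (hGΓ φ hφ)
  exact satLe_of_satLe_append (hent _ (hH.isFullModel_append_filter hG) hext)

/-- If `Γ` is strongly `C(1)`-consistent then, for non-strict statements,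
`⊨_{C(1)}` and `⊨_{C(1*)}` inference coincide. -/
theorem stmt_13 {A : Type} [Fintype A] (𝒞 : Finset (A → ℚ≥0)) (Γ : Set (PrefStmt A))
    (h : StrongCons (𝒞 : Set (A → ℚ≥0)) Γ) (α β : A) :
    Entails (𝒞 : Set (A → ℚ≥0)) Γ ⟨α, β, false⟩ ↔
      EntailsStar (𝒞 : Set (A → ℚ≥0)) Γ ⟨α, β, false⟩ :=
  stmt_13_general 𝒞 Γ h α β
end

section
/- Suppose Γ is strongly C(1)-consistent. Then for all alternatives α, β: Γ ⊨_{C(1*)} α ≤ β and Γ ⊨_{C(1*)} β ≤ α both hold if and only if α and β agree on all of C, i.e., c(α) = c(β) for every c ∈ C. -/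
open scoped NNRat

theorem satLe_and_satLe_swap_iff {A : Type} (H : List (A → ℚ≥0)) (α β : A) :
    satLe H α β ∧ satLe H β α ↔ ∀ c ∈ H, c α = c β := by
  induction H with
  | nil => simp [satLe]
  | cons c H ih =>
    simp only [satLe, List.forall_mem_cons, ← ih]
    constructor
    · rintro ⟨hαβ | ⟨e, hαβ⟩, hβα | ⟨e', hβα⟩⟩
      · exact absurd hαβ hβα.not_gt
      · exact absurd hαβ e'.not_gt
      · exact absurd hβα e.not_gt
      · exact ⟨e, hαβ, hβα⟩
    · rintro ⟨e, hαβ, hβα⟩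
      exact ⟨.inr ⟨e, hαβ⟩, .inr ⟨e.symm, hβα⟩⟩

theorem IsFullModel.satLe_and_satLe_swap_iff {A : Type} {D : Set (A → ℚ≥0)}
    {H : List (A → ℚ≥0)} (hH : IsFullModel D H) (α β : A) :
    satLe H α β ∧ satLe H β α ↔ ∀ c ∈ D, c α = c β := by
  simp only [_root_.satLe_and_satLe_swap_iff, hH.2]

theorem stmt_14_general {A : Type} (𝒞 : Finset (A → ℚ≥0)) (Γ : Set (PrefStmt A))
    (h : StrongCons (𝒞 : Set (A → ℚ≥0)) Γ) (α β : A) :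
    (EntailsStar (𝒞 : Set (A → ℚ≥0)) Γ ⟨α, β, false⟩ ∧
      EntailsStar (𝒞 : Set (A → ℚ≥0)) Γ ⟨β, α, false⟩) ↔
      ∀ c ∈ 𝒞, c α = c β := by
  simp only [EntailsStar, sat, Bool.false_eq_true, if_false]
  constructor
  · rintro ⟨hαβ, hβα⟩
    obtain ⟨H, hH, hΓ⟩ := h
    simpa using (hH.satLe_and_satLe_swap_iff α β).1 ⟨hαβ H hH hΓ, hβα H hH hΓ⟩
  · intro hagree
    have hboth (H) (hH : IsFullModel (𝒞 : Set (A → ℚ≥0)) H) : satLe H α β ∧ satLe H β α :=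
      (hH.satLe_and_satLe_swap_iff α β).2 (by simpa using hagree)
    exact ⟨fun H hH _ => (hboth H hH).1, fun H hH _ => (hboth H hH).2⟩

/-- If `Γ` is strongly `C(1)`-consistent, then `Γ ⊨_{C(1*)} α ≡ β` iff `α` and `β` agree on
all of `𝒞`. -/
theorem stmt_14 {A : Type} [Fintype A] (𝒞 : Finset (A → ℚ≥0)) (Γ : Set (PrefStmt A))
    (h : StrongCons (𝒞 : Set (A → ℚ≥0)) Γ) (α β : A) :
    (EntailsStar (𝒞 : Set (A → ℚ≥0)) Γ ⟨α, β, false⟩ ∧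
      EntailsStar (𝒞 : Set (A → ℚ≥0)) Γ ⟨β, α, false⟩) ↔
      ∀ c ∈ 𝒞, c α = c β :=
  stmt_14_general 𝒞 Γ h α β
end

section
/- Write MIB(Γ, C) = (Γ^⊥, C^⊥) and suppose C^⊥ = ∅. Then Γ is not strongly C(1)-consistent if and only if there exists a strict statement φ ∈ Γ such that all evaluations agree on its alternatives, i.e., c(α_φ) = c(β_φ) for all c ∈ C. -/
open scoped NNRat

/-!
If `C^⊥ = ∅`, no nonempty set `S` of evaluations can be covered by opposing evaluations of
statements whose relevant evaluations (supporting or opposing) all lie in `S`; otherwise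
`S` would be part of an inconsistency base. So every such `S` contains an evaluation that
opposes none of these statements, and putting it first and recursing on the rest builds a
model of `𝒞` in which every statement of `Γ` holds strictly, unless all evaluations agree on
its alternatives. Such a statement can then only fail if it is strict, and a strict statement
on which all evaluations agree fails in every model.
-/

section

variable {A : Type}

lemma mem_suppSet_union_oppSet {𝒞 : Finset (A → ℚ≥0)} {φ : PrefStmt A} {c : A → ℚ≥0} :
    c ∈ SuppSet 𝒞 φ ∪ OppSet 𝒞 φ ↔ c ∈ 𝒞 ∧ c φ.left ≠ c φ.right := by
  simp only [SuppSet, OppSet, Set.mem_union, Set.mem_ofPred_eq, ne_iff_lt_or_gt, and_or_left]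

lemma suppSet_union_oppSet_subset (𝒞 : Finset (A → ℚ≥0)) (φ : PrefStmt A) :
    SuppSet 𝒞 φ ∪ OppSet 𝒞 φ ⊆ 𝒞 :=
  fun _ hc ↦ (mem_suppSet_union_oppSet.mp hc).1

lemma satLt.satLe {H : List (A → ℚ≥0)} {α β : A} (h : satLt H α β) : satLe H α β := by
  induction H with
  | nil => exact h.elim
  | cons c H ih => exact h.imp_right fun ⟨hc, hH⟩ ↦ ⟨hc, ih hH⟩

lemma satLe_of_forall_eq {H : List (A → ℚ≥0)} {α β : A} (h : ∀ c ∈ H, c α = c β) :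
    satLe H α β := by
  induction H with
  | nil => trivial
  | cons c H ih => exact Or.inr ⟨h c List.mem_cons_self, ih fun d hd ↦ h d (.tail _ hd)⟩

lemma subset_MIBC_of_forall_mem_oppSet {𝒞 : Finset (A → ℚ≥0)} {Γ : Set (PrefStmt A)}
    {S : Set (A → ℚ≥0)} (hS : S ⊆ 𝒞)
    (hopp : ∀ c ∈ S, ∃ φ ∈ Γ, SuppSet 𝒞 φ ∪ OppSet 𝒞 φ ⊆ S ∧ c ∈ OppSet 𝒞 φ) :
    S ⊆ MIBC 𝒞 Γ := by
  intro c hc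
  refine ⟨{φ | φ ∈ Γ ∧ SuppSet 𝒞 φ ∪ OppSet 𝒞 φ ⊆ S}, S,
    ⟨fun _ hφ ↦ hφ.1, hS, fun _ hφ ↦ hφ.2, fun d hd ↦ ?_⟩, hc⟩
  obtain ⟨φ, hφ, hsub, hd⟩ := hopp d hd
  exact ⟨φ, ⟨hφ, hsub⟩, hd⟩

lemma exists_forall_not_mem_oppSet_of_MIBC_eq_empty {𝒞 : Finset (A → ℚ≥0)}
    {Γ : Set (PrefStmt A)} (hC : MIBC 𝒞 Γ = ∅) {S : Set (A → ℚ≥0)} (hS : S ⊆ 𝒞)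
    (hne : S.Nonempty) :
    ∃ c ∈ S, ∀ φ ∈ Γ, SuppSet 𝒞 φ ∪ OppSet 𝒞 φ ⊆ S → c ∉ OppSet 𝒞 φ := by
  by_contra! hopp
  obtain ⟨c, hc⟩ := hne
  simpa [hC] using subset_MIBC_of_forall_mem_oppSet hS hopp hc

lemma exists_list_satLt_or_forall_eq_of_MIBC_eq_empty {𝒞 : Finset (A → ℚ≥0)}
    {Γ : Set (PrefStmt A)} (hC : MIBC 𝒞 Γ = ∅) (S : Finset (A → ℚ≥0)) (hS : S ⊆ 𝒞) :
    ∃ L : List (A → ℚ≥0), L.Nodup ∧ (∀ c, c ∈ L ↔ c ∈ S) ∧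
      ∀ φ ∈ Γ, SuppSet 𝒞 φ ∪ OppSet 𝒞 φ ⊆ S →
        satLt L φ.left φ.right ∨ ∀ c ∈ L, c φ.left = c φ.right := by
  classical
  induction S using Finset.strongInduction with
  | _ S ih =>
  rcases S.eq_empty_or_nonempty with rfl | hne
  · exact ⟨[], List.nodup_nil, by simp, fun _ _ _ ↦ Or.inr (by simp)⟩
  obtain ⟨c, (hcS : c ∈ S), hc⟩ :=
    exists_forall_not_mem_oppSet_of_MIBC_eq_empty hC (Finset.coe_subset.mpr hS) (by simpa)
  obtain ⟨L, hnd, hmem, hL⟩ :=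
    ih (S.erase c) (Finset.erase_ssubset hcS) ((Finset.erase_subset _ _).trans hS)
  refine ⟨c :: L, List.nodup_cons.mpr ⟨by simp [hmem], hnd⟩, ?_, fun φ hφ hsub ↦ ?_⟩
  · intro d
    rw [List.mem_cons, hmem, Finset.mem_erase]
    by_cases hd : d = c <;> simp [hd, hcS]
  by_cases hrel : c ∈ SuppSet 𝒞 φ ∪ OppSet 𝒞 φ
  · -- `c` does not oppose `φ`, so it supports it and decides it strictly
    exact Or.inl <| Or.inl <| (hrel.resolve_right (hc φ hφ hsub)).2
  · have heq : c φ.left = c φ.right := by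
      by_contra hne
      exact hrel (mem_suppSet_union_oppSet.mpr ⟨hS hcS, hne⟩)
    have hsub' : SuppSet 𝒞 φ ∪ OppSet 𝒞 φ ⊆ ↑(S.erase c) := fun d hd ↦ by
      rw [Finset.coe_erase]
      exact ⟨hsub hd, by rintro rfl; exact hrel hd⟩
    refine (hL φ hφ hsub').imp (fun hlt ↦ Or.inr ⟨heq, hlt⟩) fun hall d hd ↦ ?_
    rcases List.mem_cons.mp hd with rfl | hd
    exacts [heq, hall d hd]

end

theorem stmt_17_general {A : Type} (𝒞 : Finset (A → ℚ≥0)) (Γ : Set (PrefStmt A))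
    (hC : MIBC 𝒞 Γ = ∅) :
    ¬ StrongCons (𝒞 : Set (A → ℚ≥0)) Γ ↔
      ∃ φ ∈ Γ, φ.strict = true ∧ ∀ c ∈ 𝒞, c φ.left = c φ.right := by
  constructor
  · intro hincons
    by_contra! hdecided
    obtain ⟨L, hnd, hmem, hL⟩ :=
      exists_list_satLt_or_forall_eq_of_MIBC_eq_empty hC 𝒞 subset_rfl
    refine hincons ⟨L, ⟨hnd, by simpa using hmem⟩, fun φ hφ ↦ ?_⟩
    have hφL := hL φ hφ (suppSet_union_oppSet_subset 𝒞 φ)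
    unfold sat
    split_ifs with hstrict
    · obtain ⟨c, hc, hne⟩ := hdecided φ hφ hstrict
      exact hφL.resolve_right fun hall ↦ hne (hall c ((hmem c).mpr hc))
    · exact hφL.elim satLt.satLe satLe_of_forall_eq
  · rintro ⟨φ, hφ, hstrict, hagree⟩ ⟨H, ⟨-, hH⟩, hsat⟩
    have hφH := hsat φ hφ
    simp only [sat, hstrict, if_true] at hφH
    exact not_satLt_of_forall_eq (fun c hc ↦ hagree c (by exact_mod_cast (hH c).mp hc)) hφH

/-- If `C^⊥ = ∅`, then `Γ` is not strongly `C(1)`-consistent iff `Γ` contains a strict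
statement on whose alternatives all evaluations agree. -/
theorem stmt_17 {A : Type} [Fintype A] (𝒞 : Finset (A → ℚ≥0)) (Γ : Set (PrefStmt A))
    (hC : MIBC 𝒞 Γ = ∅) :
    ¬ StrongCons (𝒞 : Set (A → ℚ≥0)) Γ ↔
      ∃ φ ∈ Γ, φ.strict = true ∧ ∀ c ∈ 𝒞, c φ.left = c φ.right :=
  stmt_17_general 𝒞 Γ hC
end

section
/- For every C(1)-model H and every pair of alternatives α, β: H satisfies α < β if and only if H satisfies the ordering statement Supp^{α<β} < Opp^{α<β}; and H satisfies α ≤ β if and only if H satisfies the ordering statement Supp^{α≤β} ≤ Opp^{α≤β} (where Supp and Opp are computed for the statement with left alternative α and right alternative β). -/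
/-! Both sides are decided by the first evaluation in `H` that separates `α` and `β`:
evaluations tying `α` and `β` lie in neither `Supp` nor `Opp`, and the first one that does
not tie them lies in `Supp` exactly when it ranks `α` below `β`. -/

open scoped NNRat

/-- `H` satisfies the ordering statement `C₁ < C₂`: some element of `C₁` appears in `H`,
and the earliest element of `C₁ ∪ C₂` appearing in `H` belongs to `C₁`. -/
def satOrdLt {A : Type} (H : List (A → ℚ≥0)) (C₁ C₂ : Set (A → ℚ≥0)) : Prop :=
  ∃ i : Fin H.length, H.get i ∈ C₁ ∧
    ∀ j : Fin H.length, j < i → H.get j ∉ C₁ ∧ H.get j ∉ C₂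

/-- `H` satisfies the ordering statement `C₁ ≤ C₂`. -/
def satOrdLe {A : Type} (H : List (A → ℚ≥0)) (C₁ C₂ : Set (A → ℚ≥0)) : Prop :=
  satOrdLt H C₁ C₂ ∨ ∀ c ∈ H, c ∉ C₁ ∧ c ∉ C₂

section OrderingStatement

variable {A : Type} {c : A → ℚ≥0} {H : List (A → ℚ≥0)} {C₁ C₂ : Set (A → ℚ≥0)}

lemma not_satOrdLt_nil : ¬ satOrdLt ([] : List (A → ℚ≥0)) C₁ C₂ :=
  fun ⟨i, _⟩ => i.elim0

lemma satOrdLe_nil : satOrdLe ([] : List (A → ℚ≥0)) C₁ C₂ :=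
  Or.inr fun _ h => absurd h List.not_mem_nil

lemma satOrdLt_cons_of_mem_left (h1 : c ∈ C₁) : satOrdLt (c :: H) C₁ C₂ :=
  ⟨0, h1, fun j hj => absurd hj (Fin.not_lt_zero j)⟩

lemma not_satOrdLt_cons_of_mem_right (h1 : c ∉ C₁) (h2 : c ∈ C₂) :
    ¬ satOrdLt (c :: H) C₁ C₂ := by
  rintro ⟨i, hi, hmin⟩
  rcases Fin.eq_zero_or_eq_succ i with rfl | ⟨j, rfl⟩
  · exact h1 hi
  · exact (hmin 0 (Fin.succ_pos j)).2 h2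

lemma satOrdLt_cons_of_notMem (h1 : c ∉ C₁) (h2 : c ∉ C₂) :
    satOrdLt (c :: H) C₁ C₂ ↔ satOrdLt H C₁ C₂ := by
  constructor
  · rintro ⟨i, hi, hmin⟩
    rcases Fin.eq_zero_or_eq_succ i with rfl | ⟨j, rfl⟩
    · exact absurd hi h1
    · exact ⟨j, by simpa using hi, fun k hk => by simpa using hmin k.succ (by simpa using hk)⟩
  · rintro ⟨j, hj, hmin⟩
    refine ⟨j.succ, by simpa using hj, fun k hk => ?_⟩
    rcases Fin.eq_zero_or_eq_succ k with rfl | ⟨k', rfl⟩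
    · exact ⟨h1, h2⟩
    · simpa using hmin k' (by simpa using hk)

lemma satOrdLe_cons_of_mem_left (h1 : c ∈ C₁) : satOrdLe (c :: H) C₁ C₂ :=
  Or.inl (satOrdLt_cons_of_mem_left h1)

lemma not_satOrdLe_cons_of_mem_right (h1 : c ∉ C₁) (h2 : c ∈ C₂) :
    ¬ satOrdLe (c :: H) C₁ C₂ := by
  rintro (h | h)
  · exact not_satOrdLt_cons_of_mem_right h1 h2 h
  · exact (h c List.mem_cons_self).2 h2

lemma satOrdLe_cons_of_notMem (h1 : c ∉ C₁) (h2 : c ∉ C₂) :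
    satOrdLe (c :: H) C₁ C₂ ↔ satOrdLe H C₁ C₂ := by
  simp only [satOrdLe, satOrdLt_cons_of_notMem h1 h2, List.mem_cons, forall_eq_or_imp,
    and_iff_right (And.intro h1 h2)]

end OrderingStatement

section SupportOpposition

variable {A : Type} {𝒞 : Finset (A → ℚ≥0)} {φ : PrefStmt A} {c : A → ℚ≥0}

lemma mem_suppSet (hc : c ∈ 𝒞) (h : c φ.left < c φ.right) : c ∈ SuppSet 𝒞 φ := ⟨hc, h⟩

lemma mem_oppSet (hc : c ∈ 𝒞) (h : c φ.right < c φ.left) : c ∈ OppSet 𝒞 φ := ⟨hc, h⟩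

lemma notMem_suppSet (h : c φ.right ≤ c φ.left) : c ∉ SuppSet 𝒞 φ :=
  fun hc => h.not_gt hc.2

lemma notMem_oppSet (h : c φ.left ≤ c φ.right) : c ∉ OppSet 𝒞 φ :=
  fun hc => h.not_gt hc.2

theorem satLt_iff_satOrdLt {H : List (A → ℚ≥0)} (hmem : ∀ c ∈ H, c ∈ 𝒞) :
    satLt H φ.left φ.right ↔ satOrdLt H (SuppSet 𝒞 φ) (OppSet 𝒞 φ) := by
  induction H with
  | nil => simpa [satLt] using not_satOrdLt_nil
  | cons c H ih =>
    have hc : c ∈ 𝒞 := hmem c List.mem_cons_self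
    specialize ih fun x hx => hmem x (List.mem_cons_of_mem c hx)
    rcases lt_trichotomy (c φ.left) (c φ.right) with hlt | heq | hgt
    · simpa [satLt, hlt] using satOrdLt_cons_of_mem_left (mem_suppSet hc hlt)
    · rw [satOrdLt_cons_of_notMem (notMem_suppSet heq.ge) (notMem_oppSet heq.le),
        ← ih]
      simp [satLt, heq]
    · simpa [satLt, hgt.not_gt, hgt.ne'] using
        not_satOrdLt_cons_of_mem_right (notMem_suppSet hgt.le) (mem_oppSet hc hgt)

theorem satLe_iff_satOrdLe {H : List (A → ℚ≥0)} (hmem : ∀ c ∈ H, c ∈ 𝒞) :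
    satLe H φ.left φ.right ↔ satOrdLe H (SuppSet 𝒞 φ) (OppSet 𝒞 φ) := by
  induction H with
  | nil => simpa [satLe] using satOrdLe_nil
  | cons c H ih =>
    have hc : c ∈ 𝒞 := hmem c List.mem_cons_self
    specialize ih fun x hx => hmem x (List.mem_cons_of_mem c hx)
    rcases lt_trichotomy (c φ.left) (c φ.right) with hlt | heq | hgt
    · simpa [satLe, hlt] using satOrdLe_cons_of_mem_left (mem_suppSet hc hlt)
    · rw [satOrdLe_cons_of_notMem (notMem_suppSet heq.ge) (notMem_oppSet heq.le),
        ← ih]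
      simp [satLe, heq]
    · simpa [satLe, hgt.not_gt, hgt.ne'] using
        not_satOrdLe_cons_of_mem_right (notMem_suppSet hgt.le) (mem_oppSet hc hgt)

end SupportOpposition

theorem stmt_18_general {A : Type} (𝒞 : Finset (A → ℚ≥0))
    (H : List (A → ℚ≥0)) (hmem : ∀ c ∈ H, c ∈ 𝒞) (α β : A) :
    (satLt H α β ↔
      satOrdLt H (SuppSet 𝒞 ⟨α, β, true⟩) (OppSet 𝒞 ⟨α, β, true⟩)) ∧
    (satLe H α β ↔
      satOrdLe H (SuppSet 𝒞 ⟨α, β, false⟩) (OppSet 𝒞 ⟨α, β, false⟩)) :=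
  ⟨satLt_iff_satOrdLt (φ := ⟨α, β, true⟩) hmem,
    satLe_iff_satOrdLe (φ := ⟨α, β, false⟩) hmem⟩

/-- Satisfaction of `α < β` (resp. `α ≤ β`) by a `C(1)`-model is equivalent to satisfaction of
the ordering statement `Supp^φ < Opp^φ` (resp. `Supp^φ ≤ Opp^φ`). -/
theorem stmt_18 {A : Type} [Fintype A] (𝒞 : Finset (A → ℚ≥0))
    (H : List (A → ℚ≥0)) (hnd : H.Nodup) (hmem : ∀ c ∈ H, c ∈ 𝒞) (α β : A) :
    (satLt H α β ↔
      satOrdLt H (SuppSet 𝒞 ⟨α, β, true⟩) (OppSet 𝒞 ⟨α, β, true⟩)) ∧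
    (satLe H α β ↔
      satOrdLe H (SuppSet 𝒞 ⟨α, β, false⟩) (OppSet 𝒞 ⟨α, β, false⟩)) :=
  stmt_18_general 𝒞 H hmem α β
end

section
/- Let C_1, C_2 be disjoint subsets of C and define alternatives α, β with evaluations: c(α) = 1 for c ∈ C_2 and c(α) = 0 for c ∈ C − C_2; c(β) = 1 for c ∈ C_1 and c(β) = 0 for c ∈ C − C_1. Then for every C(1)-model H: H satisfies the ordering statement C_1 < C_2 if and only if H satisfies the preference statement α < β. -/
open scoped NNRat

/-! Both relations are decided by the first entry of `H` that matters. An evaluation in `C₁`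
has `α < β`, one in `C₂` has `β < α`, and every other one ties `α` and `β`, so the lexicographic
comparison of `α` and `β` runs exactly like the search for the first element of `C₁ ∪ C₂`. -/

lemma satOrdLt_nil {A : Type} (C₁ C₂ : Set (A → ℚ≥0)) : ¬ satOrdLt [] C₁ C₂ :=
  fun ⟨i, _⟩ => i.elim0

lemma satOrdLt_cons {A : Type} (c : A → ℚ≥0) (H : List (A → ℚ≥0)) (C₁ C₂ : Set (A → ℚ≥0)) :
    satOrdLt (c :: H) C₁ C₂ ↔ c ∈ C₁ ∨ (c ∉ C₁ ∧ c ∉ C₂ ∧ satOrdLt H C₁ C₂) := by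
  simp [satOrdLt, Fin.exists_fin_succ, Fin.forall_fin_succ, Fin.succ_pos, and_left_comm,
    exists_and_left, and_assoc]

theorem satOrdLt_iff_satLt {A : Type} (C₁ C₂ : Set (A → ℚ≥0)) (α β : A)
    (H : List (A → ℚ≥0)) (hlt : ∀ c ∈ H, c α < c β ↔ c ∈ C₁)
    (hgt : ∀ c ∈ H, c β < c α ↔ c ∈ C₂) :
    satOrdLt H C₁ C₂ ↔ satLt H α β := by
  induction H with
  | nil => exact iff_of_false (satOrdLt_nil C₁ C₂) id
  | cons c H ih =>
    have ihH := ih (fun d hd => hlt d (List.mem_cons_of_mem c hd))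
      (fun d hd => hgt d (List.mem_cons_of_mem c hd))
    rw [satOrdLt_cons, satLt, ihH, ← hlt c List.mem_cons_self, ← hgt c List.mem_cons_self]
    constructor
    · rintro (h | ⟨h₁, h₂, h⟩)
      · exact .inl h
      · exact .inr ⟨le_antisymm (not_lt.1 h₂) (not_lt.1 h₁), h⟩
    · rintro (h | ⟨h, hH⟩)
      · exact .inl h
      · exact .inr ⟨h.not_lt, h.symm.not_lt, hH⟩

theorem stmt_19_general {A : Type} (𝒞 : Finset (A → ℚ≥0))
    (C₁ C₂ : Set (A → ℚ≥0)) (hdisj : Disjoint C₁ C₂)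
    (α β : A)
    (hα1 : ∀ c ∈ C₂, c α = 1) (hα0 : ∀ c ∈ 𝒞, c ∉ C₂ → c α = 0)
    (hβ1 : ∀ c ∈ C₁, c β = 1) (hβ0 : ∀ c ∈ 𝒞, c ∉ C₁ → c β = 0)
    (H : List (A → ℚ≥0)) (hmem : ∀ c ∈ H, c ∈ 𝒞) :
    satOrdLt H C₁ C₂ ↔ satLt H α β := by
  refine satOrdLt_iff_satLt C₁ C₂ α β H (fun c hc => ?_) (fun c hc => ?_) <;>
  · have hc𝒞 := hmem c hc
    by_cases h₁ : c ∈ C₁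
    · have h₂ : c ∉ C₂ := Set.disjoint_left.1 hdisj h₁
      simp [h₁, h₂, hβ1 c h₁, hα0 c hc𝒞 h₂]
    by_cases h₂ : c ∈ C₂
    · simp [h₁, h₂, hα1 c h₂, hβ0 c hc𝒞 h₁]
    · simp [h₁, h₂, hα0 c hc𝒞 h₂, hβ0 c hc𝒞 h₁]

/-- Any ordering statement `C₁ < C₂` can be expressed as a preference statement `α < β` for
suitably valued alternatives `α, β`. -/
theorem stmt_19 {A : Type} [Fintype A] (𝒞 : Finset (A → ℚ≥0))
    (C₁ C₂ : Set (A → ℚ≥0)) (h1 : C₁ ⊆ (𝒞 : Set (A → ℚ≥0)))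
    (h2 : C₂ ⊆ (𝒞 : Set (A → ℚ≥0))) (hdisj : Disjoint C₁ C₂)
    (α β : A)
    (hα1 : ∀ c ∈ C₂, c α = 1) (hα0 : ∀ c ∈ 𝒞, c ∉ C₂ → c α = 0)
    (hβ1 : ∀ c ∈ C₁, c β = 1) (hβ0 : ∀ c ∈ 𝒞, c ∉ C₁ → c β = 0)
    (H : List (A → ℚ≥0)) (hnd : H.Nodup) (hmem : ∀ c ∈ H, c ∈ 𝒞) :
    satOrdLt H C₁ C₂ ↔ satLt H α β :=
  stmt_19_general 𝒞 C₁ C₂ hdisj α β hα1 hα0 hβ1 hβ0 H hmem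
end
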